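/- arXiv:1506.07955 — 6 statements merged into one kernel-verified Lean document; each statement's English description precedes it below -/
import Mathlib

section
/- Let X be an n×n positive semidefinite real matrix, C an m×n real matrix, and R an m×m positive definite real matrix. Then g̃(X) = X − X Cᵀ (C X Cᵀ + R)⁻¹ C X is positive semidefinite. -/
/-!
The block matrix `[[X, X Cᴴ], [C X, C X Cᴴ + R]] = [1; C] X [1; C]ᴴ + [0; 1] R [0; 1]ᴴ` is positive
semidefinite, and `g̃(X)` is the Schur complement of its positive definite lower right block
`C X Cᴴ + R`.
-/

open Matrix

namespace Matrix.PosSemidef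

variable {n m : Type*} [Fintype n] [Fintype m] [DecidableEq n] [DecidableEq m]

theorem fromBlocks_mul_conjTranspose_add {R : Type*} [Ring R] [PartialOrder R] [StarRing R]
    [AddLeftMono R] {X : Matrix n n R} (hX : X.PosSemidef) (C : Matrix m n R)
    {Q : Matrix m m R} (hQ : Q.PosSemidef) :
    (fromBlocks X (X * Cᴴ) (C * X) (C * X * Cᴴ + Q)).PosSemidef := by
  have hsum : fromBlocks X (X * Cᴴ) (C * X) (C * X * Cᴴ + Q) =
      fromRows 1 C * X * (fromRows 1 C)ᴴ +
        fromRows (0 : Matrix n m R) 1 * Q * (fromRows (0 : Matrix n m R) 1)ᴴ := by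
    simp only [conjTranspose_fromRows_eq_fromCols_conjTranspose, fromRows_mul, mul_fromCols,
      fromCols_fromRows_eq_fromBlocks, fromBlocks_add]
    simp
  rw [hsum]
  exact (hX.mul_mul_conjTranspose_same _).add (hQ.mul_mul_conjTranspose_same _)

theorem sub_mul_conjTranspose_mul_inv_mul {K : Type*} [Field K] [PartialOrder K] [StarRing K]
    [StarOrderedRing K] {X : Matrix n n K} (hX : X.PosSemidef) (C : Matrix m n K)
    {Q : Matrix m m K} (hQ : Q.PosDef) :
    (X - X * Cᴴ * (C * X * Cᴴ + Q)⁻¹ * (C * X)).PosSemidef := by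
  have hS : (C * X * Cᴴ + Q).PosDef := hQ.posSemidef_add (hX.mul_mul_conjTranspose_same C)
  have := hS.isUnit.invertible
  have hB : (X * Cᴴ)ᴴ = C * X := by rw [conjTranspose_mul, conjTranspose_conjTranspose, hX.1.eq]
  have hblock : (fromBlocks X (X * Cᴴ) (X * Cᴴ)ᴴ (C * X * Cᴴ + Q)).PosSemidef := by
    rw [hB]
    exact hX.fromBlocks_mul_conjTranspose_add C hQ.posSemidef
  simpa only [hB] using (PosDef.fromBlocks₂₂ X (X * Cᴴ) hS).mp hblock

end Matrix.PosSemidef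

/-- For `X` positive semidefinite, `C` an `m × n` matrix and `R` positive
definite, the Riccati update `g̃(X) = X - X Cᵀ (C X Cᵀ + R)⁻¹ C X` is positive
semidefinite. -/
theorem riccati_update_posSemidef {n m : ℕ}
    (X : Matrix (Fin n) (Fin n) ℝ) (hX : X.PosSemidef)
    (C : Matrix (Fin m) (Fin n) ℝ)
    (R : Matrix (Fin m) (Fin m) ℝ) (hR : R.PosDef) :
    (X - X * Cᵀ * (C * X * Cᵀ + R)⁻¹ * (C * X)).PosSemidef := by
  simpa only [conjTranspose_eq_transpose_of_trivial] using
    hX.sub_mul_conjTranspose_mul_inv_mul C hR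
end

section
/- Let A be an n×n real matrix, Q an n×n positive semidefinite real matrix, C an m×n real matrix, and R an m×m positive definite real matrix. Define h(X) = A X Aᵀ + Q and g̃(X) = X − X Cᵀ (C X Cᵀ + R)⁻¹ C X, and let P̄ be an n×n positive semidefinite matrix satisfying g̃(h(P̄)) = P̄. Then for all natural numbers t₁ ≤ t₂, h^{t₂}(P̄) − h^{t₁}(P̄) is positive semidefinite; that is, h^{t₁}(P̄) ⪯ h^{t₂}(P̄). -/
open Matrix

/-- Lemma 2.3 of Shi et al.: if `P̄` is a positive semidefinite solution of the
steady-state Riccati equation `g̃(h(P̄)) = P̄`, then the iterates of the Lyapunov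
operator `h(X) = A X Aᵀ + Q` applied to `P̄` are monotone in the Loewner order:
for `t₁ ≤ t₂`, `h^[t₂] P̄ - h^[t₁] P̄` is positive semidefinite. -/
theorem lyapunov_iterates_steady_state_monotone {n m : ℕ}
    (A Q : Matrix (Fin n) (Fin n) ℝ) (hQ : Q.PosSemidef)
    (C : Matrix (Fin m) (Fin n) ℝ)
    (R : Matrix (Fin m) (Fin m) ℝ) (hR : R.PosDef)
    (Pbar : Matrix (Fin n) (Fin n) ℝ) (hPbar : Pbar.PosSemidef)
    (hfix : (A * Pbar * Aᵀ + Q) -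
        (A * Pbar * Aᵀ + Q) * Cᵀ * (C * (A * Pbar * Aᵀ + Q) * Cᵀ + R)⁻¹ *
          (C * (A * Pbar * Aᵀ + Q)) = Pbar)
    (t₁ t₂ : ℕ) (ht : t₁ ≤ t₂) :
    ((fun Z => A * Z * Aᵀ + Q)^[t₂] Pbar - (fun Z => A * Z * Aᵀ + Q)^[t₁] Pbar).PosSemidef := by
  set h : Matrix (Fin n) (Fin n) ℝ → Matrix (Fin n) (Fin n) ℝ :=
    fun Z => A * Z * Aᵀ + Q with hh
  set M : Matrix (Fin n) (Fin n) ℝ := A * Pbar * Aᵀ + Q with hMdef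
  have hMpsd : M.PosSemidef := by
    have : (A * Pbar * Aᵀ).PosSemidef := by
      simpa using hPbar.mul_mul_conjTranspose_same A
    exact this.add hQ
  have hSpd : (C * M * Cᵀ + R).PosDef := by
    have hC : (C * M * Cᵀ).PosSemidef := by
      simpa using hMpsd.mul_mul_conjTranspose_same C
    exact Matrix.PosDef.posSemidef_add hC hR
  have hSinv : (C * M * Cᵀ + R)⁻¹.PosSemidef := hSpd.inv.posSemidef
  -- base step: h Pbar - Pbar is PSD
  have hbase : (h Pbar - Pbar).PosSemidef := by
    have hconj : (M * Cᵀ)ᴴ = C * M := by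
      rw [conjTranspose_mul, hMpsd.isHermitian.eq]; simp
    have key : M - Pbar = (M * Cᵀ) * (C * M * Cᵀ + R)⁻¹ * (M * Cᵀ)ᴴ := by
      rw [hconj]
      conv_lhs => rw [← hfix]
      abel
    have : h Pbar = M := rfl
    rw [this, key]
    exact hSinv.mul_mul_conjTranspose_same (M * Cᵀ)
  -- step: differences of successive iterates are PSD
  have hstep : ∀ k : ℕ, (h^[k+1] Pbar - h^[k] Pbar).PosSemidef := by
    intro k
    induction k with
    | zero => simpa using hbase
    | succ k ih =>
      have hgen : ∀ X Y : Matrix (Fin n) (Fin n) ℝ,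
          h X - h Y = A * (X - Y) * Aᵀ := by
        intro X Y
        show A * X * Aᵀ + Q - (A * Y * Aᵀ + Q) = A * (X - Y) * Aᵀ
        noncomm_ring
      have key : h^[k+1+1] Pbar - h^[k+1] Pbar
          = A * (h^[k+1] Pbar - h^[k] Pbar) * Aᵀ := by
        rw [Function.iterate_succ_apply' h (k+1), Function.iterate_succ_apply' h k,
          hgen]
      rw [key]
      exact ih.mul_mul_conjTranspose_same A
  -- telescoping
  induction t₂ with
  | zero =>
    obtain rfl : t₁ = 0 := Nat.le_zero.mp ht
    simpa using (Matrix.PosSemidef.zero : (0 : Matrix (Fin n) (Fin n) ℝ).PosSemidef)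
  | succ t ih =>
    rcases Nat.lt_or_ge t₁ (t+1) with hlt | hge
    · have ht' : t₁ ≤ t := Nat.lt_succ_iff.mp hlt
      have key : h^[t+1] Pbar - h^[t₁] Pbar
          = (h^[t+1] Pbar - h^[t] Pbar) + (h^[t] Pbar - h^[t₁] Pbar) := by
        abel
      rw [key]
      exact (hstep t).add (ih ht')
    · obtain rfl : t₁ = t + 1 := le_antisymm ht hge
      simpa using (Matrix.PosSemidef.zero : (0 : Matrix (Fin n) (Fin n) ℝ).PosSemidef)
end

section
/- Let A be an n×n real matrix, Q an n×n positive semidefinite real matrix, C an m×n real matrix, and R an m×m positive definite real matrix. Define h(X) = A X Aᵀ + Q and g̃(X) = X − X Cᵀ (C X Cᵀ + R)⁻¹ C X, and let P̄ be an n×n positive semidefinite matrix satisfying g̃(h(P̄)) = P̄. Then for all natural numbers t₁ ≤ t₂, trace(h^{t₁}(P̄)) ≤ trace(h^{t₂}(P̄)). -/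
/-!
The Riccati measurement update never increases a positive semidefinite covariance in the Loewner
order, so a steady state `P̄ = g̃(h P̄)` satisfies `P̄ ≤ h P̄`. Since `h X = A X Aᴴ + Q` is monotone,
iterating `h` turns this one inequality into the increasing chain `h^[t] P̄`, and the trace is
monotone in the Loewner order.
-/

open Matrix
open scoped MatrixOrder ComplexOrder

namespace Matrix

variable {ι κ 𝕜 : Type*} [Fintype ι] [Fintype κ] [RCLike 𝕜]

def lyapunov (A Q : Matrix ι ι 𝕜) (X : Matrix ι ι 𝕜) : Matrix ι ι 𝕜 :=
  A * X * Aᴴ + Q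

noncomputable def riccatiUpdate [DecidableEq κ] (C : Matrix κ ι 𝕜) (R : Matrix κ κ 𝕜)
    (X : Matrix ι ι 𝕜) : Matrix ι ι 𝕜 :=
  X - X * Cᴴ * (C * X * Cᴴ + R)⁻¹ * (C * X)

theorem monotone_lyapunov (A Q : Matrix ι ι 𝕜) : Monotone (lyapunov A Q) :=
  fun _ _ hXY => add_le_add_left (star_right_conjugate_le_conjugate hXY A) Q

theorem PosSemidef.lyapunov {A Q X : Matrix ι ι 𝕜} (hX : X.PosSemidef) (hQ : Q.PosSemidef) :
    (lyapunov A Q X).PosSemidef :=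
  (hX.mul_mul_conjTranspose_same A).add hQ

/-- The inverse is taken in Mathlib's sense (`0` for a singular matrix), which is positive
semidefinite either way. -/
theorem riccatiUpdate_le_self [DecidableEq κ] {C : Matrix κ ι 𝕜} {R : Matrix κ κ 𝕜}
    {X : Matrix ι ι 𝕜} (hR : R.PosSemidef) (hX : X.PosSemidef) : riccatiUpdate C R X ≤ X := by
  have hS : (C * X * Cᴴ + R)⁻¹.PosSemidef :=
    ((hX.mul_mul_conjTranspose_same C).add hR).inv
  have hgain : (X * Cᴴ * (C * X * Cᴴ + R)⁻¹ * (C * X)).PosSemidef := by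
    simpa [conjTranspose_mul, hX.isHermitian.eq, Matrix.mul_assoc] using
      hS.conjTranspose_mul_mul_same (C * X)
  exact sub_le_self X hgain.nonneg

theorem le_lyapunov_of_riccatiUpdate_lyapunov_eq [DecidableEq κ] {A Q P : Matrix ι ι 𝕜}
    {C : Matrix κ ι 𝕜} {R : Matrix κ κ 𝕜} (hQ : Q.PosSemidef) (hR : R.PosSemidef)
    (hP : P.PosSemidef) (hfix : riccatiUpdate C R (lyapunov A Q P) = P) :
    P ≤ lyapunov A Q P :=
  calc P = riccatiUpdate C R (lyapunov A Q P) := hfix.symm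
    _ ≤ lyapunov A Q P := riccatiUpdate_le_self hR (hP.lyapunov hQ)

theorem trace_mono {X Y : Matrix ι ι 𝕜} (hXY : X ≤ Y) : X.trace ≤ Y.trace :=
  OrderHomClass.mono (tracePositiveLinearMap ι ℝ 𝕜) hXY

end Matrix

/-- Lemma 2.3 of Shi et al. (trace form): if `P̄` is a positive semidefinite
solution of the steady-state Riccati equation `g̃(h(P̄)) = P̄`, then the traces of
the Lyapunov iterates `h^[t] P̄` are monotone: for `t₁ ≤ t₂`,
`trace (h^[t₁] P̄) ≤ trace (h^[t₂] P̄)`. -/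
theorem lyapunov_iterates_steady_state_trace_mono {n m : ℕ}
    (A Q : Matrix (Fin n) (Fin n) ℝ) (hQ : Q.PosSemidef)
    (C : Matrix (Fin m) (Fin n) ℝ)
    (R : Matrix (Fin m) (Fin m) ℝ) (hR : R.PosDef)
    (Pbar : Matrix (Fin n) (Fin n) ℝ) (hPbar : Pbar.PosSemidef)
    (hfix : (A * Pbar * Aᵀ + Q) -
        (A * Pbar * Aᵀ + Q) * Cᵀ * (C * (A * Pbar * Aᵀ + Q) * Cᵀ + R)⁻¹ *
          (C * (A * Pbar * Aᵀ + Q)) = Pbar)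
    (t₁ t₂ : ℕ) (ht : t₁ ≤ t₂) :
    ((fun Z => A * Z * Aᵀ + Q)^[t₁] Pbar).trace ≤ ((fun Z => A * Z * Aᵀ + Q)^[t₂] Pbar).trace := by
  have hlyapunov : (fun Z => A * Z * Aᵀ + Q) = lyapunov A Q := by
    ext1 Z
    rw [lyapunov, conjTranspose_eq_transpose_of_trivial]
  have hsteady : riccatiUpdate C R (lyapunov A Q Pbar) = Pbar := by
    simpa only [riccatiUpdate, ← hlyapunov, conjTranspose_eq_transpose_of_trivial] using hfix
  have hstep : Pbar ≤ lyapunov A Q Pbar :=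
    le_lyapunov_of_riccatiUpdate_lyapunov_eq hQ hR.posSemidef hPbar hsteady
  rw [hlyapunov]
  exact trace_mono ((monotone_lyapunov A Q).monotone_iterate_of_le_map hstep ht)
end

section
/- Let A be an n×n real matrix, Q an n×n positive semidefinite real matrix, P̄ an n×n positive semidefinite real matrix, and h(X) = A X Aᵀ + Q. Let λ ∈ (0,1), and on a probability space let (λ_k)_{k≥1} be an i.i.d. sequence of {0,1}-valued random variables with P(λ_k = 1) = λ. Define the random matrices P_0 = P̄ and, for k ≥ 1, P_k = P̄ if λ_k = 1 and P_k = h(P_{k−1}) if λ_k = 0. Then for every k ≥ 0, E[trace(P_k)] = Σ_{i=0}^{k−1} λ(1−λ)^i · trace(h^i(P̄)) + (1−λ)^k · trace(h^k(P̄)). -/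
open Matrix MeasureTheory ProbabilityTheory

/-!
After a dropout streak of length `j` the remote covariance is `h^j P̄`, so
`P k = h^[N k] P̄`, where `N k` is the length of the run of dropouts ending at time `k`
(capped at `k`, the estimator having started from `P̄`). Since `N (k + 1)` is `0` on arrival
and `N k + 1` on dropout, and the arrival at `k + 1` is independent of `λ₁, …, λₖ`,
`N k` follows the geometric law truncated at `k`:
`P(N k = j) = λ (1 - λ) ^ j` for `j < k` and `P(N k = k) = (1 - λ) ^ k`.
-/

def dropoutStreak (b : ℕ → Bool) : ℕ → ℕ
  | 0 => 0
  | k + 1 => if b (k + 1) then 0 else dropoutStreak b k + 1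

section Streak

variable (b : ℕ → Bool)

lemma dropoutStreak_le (k : ℕ) : dropoutStreak b k ≤ k := by
  induction k with
  | zero => rfl
  | succ k ih => unfold dropoutStreak; split <;> omega

lemma dropoutStreak_succ_eq_zero_iff (k : ℕ) :
    dropoutStreak b (k + 1) = 0 ↔ b (k + 1) = true := by
  cases h : b (k + 1) <;> simp [dropoutStreak, h]

lemma dropoutStreak_succ_eq_succ_iff (k j : ℕ) :
    dropoutStreak b (k + 1) = j + 1 ↔ b (k + 1) = false ∧ dropoutStreak b k = j := by
  cases h : b (k + 1) <;> simp [dropoutStreak, h]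

lemma eq_iterate_dropoutStreak {α : Type*} (f : α → α) (x₀ : α) (x : ℕ → α)
    (h0 : x 0 = x₀) (hsucc : ∀ k, x (k + 1) = if b (k + 1) then x₀ else f (x k)) (k : ℕ) :
    x k = f^[dropoutStreak b k] x₀ := by
  induction k with
  | zero => exact h0
  | succ k ih =>
    cases h : b (k + 1) <;>
      simp [hsucc, dropoutStreak, h, ih, Function.iterate_succ_apply']

end Streak

section Law

variable {Ω : Type*} {mΩ : MeasurableSpace Ω} (lam : ℕ → Ω → Bool)

abbrev pastArrivals (k : ℕ) : MeasurableSpace Ω :=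
  ⨆ i ∈ Set.Iic k, MeasurableSpace.comap (lam i) inferInstance

lemma pastArrivals_mono : Monotone (pastArrivals lam) :=
  fun _ _ hkl => biSup_mono fun _ hi => le_trans hi hkl

lemma measurableSet_pastArrivals_preimage (k : ℕ) (s : Set Bool) :
    MeasurableSet[pastArrivals lam k] (lam k ⁻¹' s) :=
  le_iSup₂ (f := fun i (_ : i ∈ Set.Iic k) => MeasurableSpace.comap (lam i) inferInstance)
    k Set.self_mem_Iic _ ⟨s, trivial, rfl⟩

lemma pastArrivals_le (hmeas : ∀ i, Measurable (lam i)) (k : ℕ) : pastArrivals lam k ≤ mΩ :=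
  iSup₂_le fun i _ => (hmeas i).comap_le

lemma measurableSet_dropoutStreak_eq (k j : ℕ) :
    MeasurableSet[pastArrivals lam k] {ω | dropoutStreak (lam · ω) k = j} := by
  induction k generalizing j with
  | zero => exact MeasurableSet.const (0 = j)
  | succ k ih =>
    cases j with
    | zero =>
      simp only [dropoutStreak_succ_eq_zero_iff]
      exact measurableSet_pastArrivals_preimage lam (k + 1) {true}
    | succ j =>
      simp only [dropoutStreak_succ_eq_succ_iff, Set.ofPred_and]
      exact (measurableSet_pastArrivals_preimage lam (k + 1) {false}).inter
        (pastArrivals_mono lam k.le_succ _ (ih j))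

variable {μ : Measure Ω}

lemma indep_comap_succ_pastArrivals (hmeas : ∀ i, Measurable (lam i))
    (hindep : iIndepFun lam μ) (k : ℕ) :
    Indep (MeasurableSpace.comap (lam (k + 1)) inferInstance) (pastArrivals lam k) μ := by
  simpa [pastArrivals] using indep_iSup_of_disjoint (fun i => (hmeas i).comap_le)
    ((iIndepFun_iff_iIndep _ _ _).1 hindep)
    (Set.disjoint_singleton_left.2 (by simp) : Disjoint {k + 1} (Set.Iic k))

theorem measureReal_dropoutStreak_eq [IsProbabilityMeasure μ]
    (hmeas : ∀ i, Measurable (lam i)) (hindep : iIndepFun lam μ) {p : ℝ}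
    (hp : ∀ i, 1 ≤ i → μ.real {ω | lam i ω = true} = p) {k j : ℕ} (hj : j ≤ k) :
    μ.real {ω | dropoutStreak (lam · ω) k = j} =
      if j = k then (1 - p) ^ k else p * (1 - p) ^ j := by
  induction k generalizing j with
  | zero =>
    obtain rfl : j = 0 := by omega
    simp [dropoutStreak]
  | succ k ih =>
    cases j with
    | zero =>
      simp only [dropoutStreak_succ_eq_zero_iff, hp (k + 1) le_add_self]
      simp
    | succ j =>
      have hfalse : μ.real {ω | lam (k + 1) ω = false} = 1 - p := by
        rw [← hp (k + 1) le_add_self, ← probReal_compl_eq_one_sub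
          (measurableSet_eq_fun (hmeas (k + 1)) measurable_const)]
        congr 1
        ext ω
        simp
      have hinter := (Indep_iff _ _ _).1 (indep_comap_succ_pastArrivals lam hmeas hindep k)
        {ω | lam (k + 1) ω = false} _ ⟨{false}, trivial, rfl⟩
        (measurableSet_dropoutStreak_eq lam k j)
      simp only [dropoutStreak_succ_eq_succ_iff, Set.ofPred_and]
      rw [measureReal_def, hinter, ENNReal.toReal_mul, ← measureReal_def, ← measureReal_def,
        hfalse, ih (by omega)]
      split_ifs <;> first | omega | ring

end Law

theorem integral_comp_eq_sum_measureReal {Ω : Type*} [MeasurableSpace Ω]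
    (μ : Measure Ω) [IsFiniteMeasure μ] {N : Ω → ℕ} (hN : ∀ j, MeasurableSet {ω | N ω = j})
    {s : Finset ℕ} (hs : ∀ ω, N ω ∈ s) (F : ℕ → ℝ) :
    ∫ ω, F (N ω) ∂μ = ∑ j ∈ s, μ.real {ω | N ω = j} * F j := by
  have hsum : (fun ω => F (N ω)) =
      fun ω => ∑ j ∈ s, {ω | N ω = j}.indicator (fun _ => F j) ω := by
    funext ω
    rw [Finset.sum_eq_single_of_mem (N ω) (hs ω)]
    · simp
    · intro j _ hj
      simp [Ne.symm hj]
  rw [hsum, integral_finsetSum _ fun j _ => (integrable_const (F j)).indicator (hN j)]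
  simp_rw [integral_indicator_const _ (hN _), smul_eq_mul]

theorem expected_trace_error_covariance_general {d : ℕ}
    (A Q Pbar : Matrix (Fin d) (Fin d) ℝ)
    (lam_prob : ℝ)
    {Ω : Type*} [MeasurableSpace Ω] (μ : Measure Ω) [IsProbabilityMeasure μ]
    (lam : ℕ → Ω → Bool) (hmeas : ∀ k, Measurable (lam k))
    (hindep : iIndepFun lam μ)
    (hdist : ∀ k, 1 ≤ k → (μ {ω | lam k ω = true}).toReal = lam_prob)
    (P : ℕ → Ω → Matrix (Fin d) (Fin d) ℝ)
    (hP0 : ∀ ω, P 0 ω = Pbar)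
    (hPrec : ∀ k ω, P (k + 1) ω =
      if lam (k + 1) ω = true then Pbar else A * P k ω * Aᵀ + Q)
    (k : ℕ) :
    ∫ ω, (P k ω).trace ∂μ =
      (∑ i ∈ Finset.range k,
        lam_prob * (1 - lam_prob) ^ i * ((fun Z => A * Z * Aᵀ + Q)^[i] Pbar).trace) +
      (1 - lam_prob) ^ k * ((fun Z => A * Z * Aᵀ + Q)^[k] Pbar).trace := by
  have hP (ω : Ω) : P k ω = (fun Z => A * Z * Aᵀ + Q)^[dropoutStreak (lam · ω) k] Pbar :=
    eq_iterate_dropoutStreak _ _ Pbar (P · ω) (hP0 ω) (fun k => hPrec k ω) k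
  have hlaw {j : ℕ} (hj : j ≤ k) := measureReal_dropoutStreak_eq lam hmeas hindep hdist hj
  simp_rw [hP]
  rw [integral_comp_eq_sum_measureReal μ
      (fun j => pastArrivals_le lam hmeas k _ (measurableSet_dropoutStreak_eq lam k j))
      (fun ω => Finset.mem_range_succ_iff.2 (dropoutStreak_le _ k))
      fun j => ((fun Z => A * Z * Aᵀ + Q)^[j] Pbar).trace,
    Finset.sum_range_succ, hlaw le_rfl, if_pos rfl]
  congr 1
  refine Finset.sum_congr rfl fun j hj => ?_
  rw [Finset.mem_range] at hj
  rw [hlaw hj.le, if_neg hj.ne]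

/-- Expected estimation error under constant low-power transmission: with i.i.d.
Bernoulli(λ) arrival indicators `lam k` and error covariance recursion
`P 0 = P̄`, `P (k+1) = P̄` on arrival and `P (k+1) = h (P k)` on dropout, where
`h(X) = A X Aᵀ + Q`, the expectation satisfies
`E[trace (P k)] = ∑_{i<k} λ (1-λ)^i trace (h^[i] P̄) + (1-λ)^k trace (h^[k] P̄)`. -/
theorem expected_trace_error_covariance {d : ℕ}
    (A Q Pbar : Matrix (Fin d) (Fin d) ℝ) (hQ : Q.PosSemidef) (hPbar : Pbar.PosSemidef)
    (lam_prob : ℝ) (hlam0 : 0 < lam_prob) (hlam1 : lam_prob < 1)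
    {Ω : Type*} [MeasurableSpace Ω] (μ : Measure Ω) [IsProbabilityMeasure μ]
    (lam : ℕ → Ω → Bool) (hmeas : ∀ k, Measurable (lam k))
    (hindep : iIndepFun lam μ)
    (hdist : ∀ k, 1 ≤ k → (μ {ω | lam k ω = true}).toReal = lam_prob)
    (P : ℕ → Ω → Matrix (Fin d) (Fin d) ℝ)
    (hP0 : ∀ ω, P 0 ω = Pbar)
    (hPrec : ∀ k ω, P (k + 1) ω =
      if lam (k + 1) ω = true then Pbar else A * P k ω * Aᵀ + Q)
    (k : ℕ) :
    ∫ ω, (P k ω).trace ∂μ =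
      (∑ i ∈ Finset.range k,
        lam_prob * (1 - lam_prob) ^ i * ((fun Z => A * Z * Aᵀ + Q)^[i] Pbar).trace) +
      (1 - lam_prob) ^ k * ((fun Z => A * Z * Aᵀ + Q)^[k] Pbar).trace :=
  expected_trace_error_covariance_general A Q Pbar lam_prob μ lam hmeas hindep hdist P hP0 hPrec k
end

section
/- Let A be an n×n real matrix, Q an n×n positive semidefinite real matrix, P̄ an n×n positive semidefinite real matrix, and h(X) = A X Aᵀ + Q. Let λ ∈ (0,1), and on a probability space let (λ_k)_{k≥1} be an i.i.d. sequence of {0,1}-valued random variables with P(λ_k = 1) = λ. Define P_0 = P̄ and, for k ≥ 1, P_k = P̄ if λ_k = 1 and P_k = h(P_{k−1}) if λ_k = 0. If the series Σ_{i≥0} (1−λ)^i · trace(h^i(P̄)) is summable, then lim_{k→∞} E[trace(P_k)] = Σ_{i=0}^{∞} λ(1−λ)^i · trace(h^i(P̄)), and consequently the time-averaged cost satisfies lim_{T→∞} (1/T) Σ_{k=1}^{T} E[trace(P_k)] = Σ_{i=0}^{∞} λ(1−λ)^i · trace(h^i(P̄)). -/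
/-!
Let `τ k` be the number of steps since the last arrival at or before time `k`. Then
`P k = h^[τ k] P̄`, and `τ (k + 1)` is `0` if packet `k + 1` arrives and `τ k + 1` otherwise,
where the arrival of packet `k + 1` is independent of `τ k`. Conditioning on that arrival and
inducting on `k` gives, for every `g : ℕ → ℝ`,
`E[g (τ k)] = ∑_{i<k} λ (1-λ)^i g i + (1-λ)^k g k`.
With `g i = trace (h^[i] P̄)`, summability of `(1-λ)^i g i` makes the last term vanish and the
sum converge, and the Cesàro mean has the same limit.
-/

open Matrix MeasureTheory ProbabilityTheory Filter

open Finset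

/-- Steps since the last `true` among `b 1, …, b k`, or `k` if there is none: `b 0` is never
read, time `0` counts as an arrival. -/
def sinceLastTrue (b : ℕ → Bool) : ℕ → ℕ
  | 0 => 0
  | k + 1 => if b (k + 1) then 0 else sinceLastTrue b k + 1

section sinceLastTrue

variable {b b' : ℕ → Bool}

lemma sinceLastTrue_le (k : ℕ) : sinceLastTrue b k ≤ k := by
  induction k with
  | zero => rfl
  | succ k ih => unfold sinceLastTrue; split <;> omega

lemma sinceLastTrue_congr {k : ℕ} (h : ∀ j ≤ k, b j = b' j) :
    sinceLastTrue b k = sinceLastTrue b' k := by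
  induction k with
  | zero => rfl
  | succ k ih =>
    simp only [sinceLastTrue, h (k + 1) le_rfl, ih fun j hj => h j (by omega)]

lemma eq_iterate_sinceLastTrue {α : Type*} (f : α → α) (x₀ : α) (x : ℕ → α) (h0 : x 0 = x₀)
    (hsucc : ∀ k, x (k + 1) = if b (k + 1) then x₀ else f (x k)) (k : ℕ) :
    x k = f^[sinceLastTrue b k] x₀ := by
  induction k with
  | zero => exact h0
  | succ k ih =>
    rw [hsucc, sinceLastTrue]
    split
    · rfl
    · rw [Function.iterate_succ_apply', ih]

end sinceLastTrue

section Bernoulli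

variable {Ω : Type*} [MeasurableSpace Ω] {μ : Measure Ω} [IsProbabilityMeasure μ]

lemma integral_comp_bool {X : Ω → Bool} (hX : Measurable X) (f : Bool → ℝ) :
    ∫ ω, f (X ω) ∂μ =
      μ.real {ω | X ω = true} * f true + (1 - μ.real {ω | X ω = true}) * f false := by
  have hcompl : {ω | X ω = false} = {ω | X ω = true}ᶜ := by ext; simp
  rw [← integral_map hX.aemeasurable (measurable_of_countable f).aestronglyMeasurable,
    integral_fintype Integrable.of_finite, Fintype.sum_bool,
    map_measureReal_apply hX (measurableSet_singleton _),
    map_measureReal_apply hX (measurableSet_singleton _)]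
  simp only [Set.preimage, Set.mem_singleton_iff, hcompl, smul_eq_mul]
  rw [probReal_compl_eq_one_sub (s := {ω | X ω = true}) (hX (measurableSet_singleton true))]

lemma integral_ite_of_indepFun {β : Type*} [MeasurableSpace β] {X : Ω → Bool} {Y : Ω → β}
    (hXY : IndepFun X Y μ) (hX : Measurable X) (hY : Measurable Y) (a : ℝ) {G : β → ℝ}
    (hG : Integrable G (μ.map Y)) :
    ∫ ω, (if X ω then a else G (Y ω)) ∂μ =
      μ.real {ω | X ω = true} * a + (1 - μ.real {ω | X ω = true}) * ∫ ω, G (Y ω) ∂μ := by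
  -- product form `f₂ (X ω) * G (Y ω)` is what independence factorizes
  set f₁ : Bool → ℝ := fun x => if x then a else 0
  set f₂ : Bool → ℝ := fun x => if x then 0 else 1
  have hsplit : ∀ ω, (if X ω then a else G (Y ω)) = f₁ (X ω) + f₂ (X ω) * G (Y ω) := by
    intro ω; cases X ω <;> simp [f₁, f₂]
  have hGY : Integrable (fun ω => G (Y ω)) μ := hG.comp_measurable hY
  have hf₁ : Integrable (fun ω => f₁ (X ω)) μ :=
    (Integrable.of_finite (f := f₁) (μ := μ.map X)).comp_measurable hX
  have hf₂ : Integrable (fun ω => f₂ (X ω) * G (Y ω)) μ :=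
    hGY.bdd_mul ((measurable_of_countable f₂).comp hX).aestronglyMeasurable
      (c := 1) (ae_of_all _ fun ω => by cases X ω <;> simp [f₂])
  rw [integral_congr_ae (ae_of_all _ hsplit),
    integral_add hf₁ hf₂,
    hXY.integral_fun_comp_mul_comp hX.aemeasurable hY.aemeasurable
      (measurable_of_countable f₂).aestronglyMeasurable hG.aestronglyMeasurable,
    integral_comp_bool hX, integral_comp_bool hX]
  simp [f₁, f₂]

end Bernoulli

section BernoulliProcess

variable {Ω : Type*} [MeasurableSpace Ω] {μ : Measure Ω} {lam : ℕ → Ω → Bool}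

lemma measurable_sinceLastTrue (hmeas : ∀ k, Measurable (lam k)) (k : ℕ) :
    Measurable fun ω => sinceLastTrue (lam · ω) k := by
  induction k with
  | zero => exact measurable_const
  | succ k ih =>
    exact Measurable.ite (hmeas (k + 1) (measurableSet_singleton true)) measurable_const
      (ih.add_const 1)

lemma indepFun_sinceLastTrue (hindep : iIndepFun lam μ) (hmeas : ∀ k, Measurable (lam k))
    (k : ℕ) : IndepFun (lam (k + 1)) (fun ω => sinceLastTrue (lam · ω) k) μ := by
  -- `sinceLastTrue (lam · ω) k` is a function of `lam 0 ω, …, lam k ω`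
  have h := (hindep.indepFun_finset {k + 1} (range (k + 1)) (by simp) hmeas).comp
    (measurable_pi_apply ⟨k + 1, mem_singleton_self _⟩)
    (measurable_of_countable fun v : range (k + 1) → Bool =>
      sinceLastTrue (fun j => if hj : j ∈ range (k + 1) then v ⟨j, hj⟩ else false) k)
  convert h using 1
  · rfl
  funext ω
  exact sinceLastTrue_congr fun j hj => by simp [Nat.lt_succ_of_le hj]

variable [IsProbabilityMeasure μ]

lemma integrable_comp_of_le {Y : Ω → ℕ} (hY : Measurable Y) {k : ℕ} (hYk : ∀ ω, Y ω ≤ k)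
    (g : ℕ → ℝ) : Integrable (fun ω => g (Y ω)) μ :=
  Integrable.of_bound ((measurable_of_countable g).comp hY).aestronglyMeasurable
    (∑ i ∈ range (k + 1), ‖g i‖) (ae_of_all _ fun ω =>
      single_le_sum (f := fun i => ‖g i‖) (fun _ _ => norm_nonneg _)
        (mem_range.2 (Nat.lt_succ_of_le (hYk ω))))

theorem integral_comp_sinceLastTrue (hindep : iIndepFun lam μ) (hmeas : ∀ k, Measurable (lam k))
    {p : ℝ} (hp : ∀ k, 1 ≤ k → μ.real {ω | lam k ω = true} = p) (k : ℕ) (g : ℕ → ℝ) :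
    ∫ ω, g (sinceLastTrue (lam · ω) k) ∂μ =
      ∑ i ∈ range k, p * (1 - p) ^ i * g i + (1 - p) ^ k * g k := by
  induction k generalizing g with
  | zero => simp [sinceLastTrue]
  | succ k ih =>
    have hY := measurable_sinceLastTrue hmeas k
    have hG : Integrable (fun i => g (i + 1)) (μ.map fun ω => sinceLastTrue (lam · ω) k) :=
      (integrable_map_measure (measurable_of_countable _).aestronglyMeasurable hY.aemeasurable).2
        (integrable_comp_of_le (μ := μ) hY (fun _ => sinceLastTrue_le k) fun i => g (i + 1))
    have hstep := integral_ite_of_indepFun (indepFun_sinceLastTrue hindep hmeas k)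
      (hmeas (k + 1)) hY (g 0) hG
    calc ∫ ω, g (sinceLastTrue (lam · ω) (k + 1)) ∂μ
        = ∫ ω, (if lam (k + 1) ω then g 0 else g (sinceLastTrue (lam · ω) k + 1)) ∂μ := by
          simp only [sinceLastTrue, apply_ite g]
      _ = p * g 0 + (1 - p) * ∫ ω, g (sinceLastTrue (lam · ω) k + 1) ∂μ := by
          rw [hstep, hp _ k.succ_pos]
      _ = _ := by
          rw [ih (fun i => g (i + 1)), sum_range_succ', mul_add, mul_sum]
          ring_nf

end BernoulliProcess

lemma tendsto_sum_range_add_geometric_tail {p : ℝ} {c : ℕ → ℝ}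
    (hsum : Summable fun i => (1 - p) ^ i * c i) :
    Tendsto (fun k => ∑ i ∈ range k, p * (1 - p) ^ i * c i + (1 - p) ^ k * c k) atTop
      (nhds (∑' i, p * (1 - p) ^ i * c i)) := by
  have hweighted : Summable fun i => p * (1 - p) ^ i * c i := by
    simpa only [mul_assoc] using hsum.mul_left p
  simpa using hweighted.hasSum.tendsto_sum_nat.add hsum.tendsto_atTop_zero

lemma Filter.Tendsto.cesaro_Icc {u : ℕ → ℝ} {l : ℝ} (h : Tendsto u atTop (nhds l)) :
    Tendsto (fun T : ℕ => (1 / (T : ℝ)) * ∑ k ∈ Icc 1 T, u k) atTop (nhds l) := by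
  refine ((h.comp (tendsto_add_atTop_nat 1)).cesaro).congr fun T => ?_
  rw [one_div, ← Ico_add_one_right_eq_Icc, sum_Ico_eq_sum_range, Nat.add_sub_cancel]
  simp only [Function.comp_def, add_comm]

theorem expected_trace_error_covariance_limit_general {d : ℕ}
    (A Q Pbar : Matrix (Fin d) (Fin d) ℝ)
    (lam_prob : ℝ)
    {Ω : Type*} [MeasurableSpace Ω] (μ : Measure Ω) [IsProbabilityMeasure μ]
    (lam : ℕ → Ω → Bool) (hmeas : ∀ k, Measurable (lam k))
    (hindep : iIndepFun lam μ)
    (hdist : ∀ k, 1 ≤ k → (μ {ω | lam k ω = true}).toReal = lam_prob)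
    (P : ℕ → Ω → Matrix (Fin d) (Fin d) ℝ)
    (hP0 : ∀ ω, P 0 ω = Pbar)
    (hPrec : ∀ k ω, P (k + 1) ω =
      if lam (k + 1) ω = true then Pbar else A * P k ω * Aᵀ + Q)
    (hsum : Summable (fun i => (1 - lam_prob) ^ i * ((fun Z => A * Z * Aᵀ + Q)^[i] Pbar).trace)) :
    Tendsto (fun k => ∫ ω, (P k ω).trace ∂μ) atTop
      (nhds (∑' i : ℕ,
        lam_prob * (1 - lam_prob) ^ i * ((fun Z => A * Z * Aᵀ + Q)^[i] Pbar).trace)) ∧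
    Tendsto (fun T : ℕ => (1 / (T : ℝ)) * ∑ k ∈ Finset.Icc 1 T, ∫ ω, (P k ω).trace ∂μ) atTop
      (nhds (∑' i : ℕ,
        lam_prob * (1 - lam_prob) ^ i * ((fun Z => A * Z * Aᵀ + Q)^[i] Pbar).trace)) := by
  have hP : ∀ k ω, P k ω = (fun Z => A * Z * Aᵀ + Q)^[sinceLastTrue (lam · ω) k] Pbar :=
    fun k ω => eq_iterate_sinceLastTrue _ _ (P · ω) (hP0 ω) (fun k => hPrec k ω) k
  have hE (k : ℕ) := integral_comp_sinceLastTrue hindep hmeas hdist k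
    fun i => ((fun Z => A * Z * Aᵀ + Q)^[i] Pbar).trace
  simp only [← hP] at hE
  have hlim := tendsto_sum_range_add_geometric_tail hsum
  simp only [← hE] at hlim
  exact ⟨hlim, hlim.cesaro_Icc⟩

/-- Worst-case estimation performance when all flag-ACKs are blocked: under the
same recursion as before, if `∑ (1-λ)^i trace (h^[i] P̄)` is summable, then
`E[trace (P k)]` converges to `∑_{i=0}^∞ λ (1-λ)^i trace (h^[i] P̄)`, and so does
the time-averaged cost `(1/T) ∑_{k=1}^T E[trace (P k)]`. -/
theorem expected_trace_error_covariance_limit {d : ℕ}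
    (A Q Pbar : Matrix (Fin d) (Fin d) ℝ) (hQ : Q.PosSemidef) (hPbar : Pbar.PosSemidef)
    (lam_prob : ℝ) (hlam0 : 0 < lam_prob) (hlam1 : lam_prob < 1)
    {Ω : Type*} [MeasurableSpace Ω] (μ : Measure Ω) [IsProbabilityMeasure μ]
    (lam : ℕ → Ω → Bool) (hmeas : ∀ k, Measurable (lam k))
    (hindep : iIndepFun lam μ)
    (hdist : ∀ k, 1 ≤ k → (μ {ω | lam k ω = true}).toReal = lam_prob)
    (P : ℕ → Ω → Matrix (Fin d) (Fin d) ℝ)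
    (hP0 : ∀ ω, P 0 ω = Pbar)
    (hPrec : ∀ k ω, P (k + 1) ω =
      if lam (k + 1) ω = true then Pbar else A * P k ω * Aᵀ + Q)
    (hsum : Summable (fun i => (1 - lam_prob) ^ i * ((fun Z => A * Z * Aᵀ + Q)^[i] Pbar).trace)) :
    Tendsto (fun k => ∫ ω, (P k ω).trace ∂μ) atTop
      (nhds (∑' i : ℕ,
        lam_prob * (1 - lam_prob) ^ i * ((fun Z => A * Z * Aᵀ + Q)^[i] Pbar).trace)) ∧
    Tendsto (fun T : ℕ => (1 / (T : ℝ)) * ∑ k ∈ Finset.Icc 1 T, ∫ ω, (P k ω).trace ∂μ) atTop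
      (nhds (∑' i : ℕ,
        lam_prob * (1 - lam_prob) ^ i * ((fun Z => A * Z * Aᵀ + Q)^[i] Pbar).trace)) :=
  expected_trace_error_covariance_limit_general A Q Pbar lam_prob μ lam hmeas hindep hdist P hP0
    hPrec hsum
end

section
/- Let A be an n×n real matrix, Q an n×n positive semidefinite real matrix, P̄ an n×n positive semidefinite real matrix, and h(X) = A X Aᵀ + Q. Let λ ∈ (0,1), let s be a positive integer, and on a probability space let (λ_k)_{k≥1} be an i.i.d. sequence of {0,1}-valued random variables with P(λ_k = 1) = λ. Define P_0 = P̄ and, for 1 ≤ k ≤ s, P_k = P̄ if λ_k = 1 and P_k = h(P_{k−1}) if λ_k = 0. Then Σ_{k=0}^{s} E[trace(P_k)] = (1 + λs) · trace(P̄) + Σ_{i=1}^{s} (1 + λ(s − i)) (1−λ)^i · trace(h^i(P̄)). -/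
/-!
At slot `k` the covariance is `h^[R k] P̄`, where `R k` is the length of the run of dropouts
ending at `k`. The event `i ≤ R k` is the intersection of the `i` independent dropouts at slots
`k - i + 1, …, k`, so `R k` is geometric with parameter `λ` truncated at `k`:
`P(R k = i) = λ (1 - λ)^i` for `i < k` and `P(R k = k) = (1 - λ)^k`. Summing over `k ≤ s`, the term
`trace (h^[i] P̄)` collects `(1 - λ)^i` from slot `i` and `λ (1 - λ)^i` from each of the `s - i`
later slots.
-/

open Matrix MeasureTheory ProbabilityTheory Finset

-- Slot `0` is the high-power slot, so `b 0` is never consulted.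
def dropoutRun (b : ℕ → Bool) : ℕ → ℕ
  | 0 => 0
  | k + 1 => if b (k + 1) then 0 else dropoutRun b k + 1

lemma dropoutRun_le (b : ℕ → Bool) (k : ℕ) : dropoutRun b k ≤ k := by
  induction k with
  | zero => rfl
  | succ k ih => unfold dropoutRun; split <;> omega

lemma le_dropoutRun_iff (b : ℕ → Bool) (k i : ℕ) :
    i ≤ dropoutRun b k ↔ i ≤ k ∧ ∀ j ∈ Ioc (k - i) k, b j = false := by
  induction k generalizing i with
  | zero => simp [dropoutRun]
  | succ k ih =>
    cases i with
    | zero => simp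
    | succ i =>
      have hIoc : Ioc (k + 1 - (i + 1)) (k + 1) = insert (k + 1) (Ioc (k - i) k) := by
        ext j; simp only [mem_Ioc, mem_insert]; omega
      rw [hIoc, forall_mem_insert, dropoutRun]
      cases b (k + 1) <;> simp [ih]

lemma iterate_dropoutRun {α : Type*} (f : α → α) (x₀ : α) (b : ℕ → Bool) (x : ℕ → α) (s : ℕ)
    (h₀ : x 0 = x₀) (hrec : ∀ k, k + 1 ≤ s → x (k + 1) = if b (k + 1) then x₀ else f (x k)) :
    ∀ k ≤ s, x k = f^[dropoutRun b k] x₀ := by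
  intro k hk
  induction k with
  | zero => exact h₀
  | succ k ih =>
    rw [hrec k hk, dropoutRun]
    cases b (k + 1)
    · simp [ih (by omega), Function.iterate_succ_apply']
    · rfl

lemma integral_comp_eq_sum_measureReal_s13 {Ω : Type*} [MeasurableSpace Ω] {μ : Measure Ω}
    [IsFiniteMeasure μ] {X : Ω → ℕ} (hX : Measurable X) {n : ℕ} (hXn : ∀ ω, X ω ≤ n)
    (g : ℕ → ℝ) :
    ∫ ω, g (X ω) ∂μ = ∑ i ∈ range (n + 1), μ.real {ω | X ω = i} * g i := by
  have hXi : ∀ i, MeasurableSet {ω | X ω = i} := fun i ↦ hX (measurableSet_singleton i)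
  have hsum : ∀ ω, g (X ω) = ∑ i ∈ range (n + 1), {ω | X ω = i}.indicator (fun _ ↦ g i) ω := by
    intro ω
    simp [Set.indicator_apply, eq_comm (a := X ω), hXn]
  simp_rw [hsum]
  rw [integral_finsetSum _ fun i _ ↦ (integrable_const _).indicator (hXi i)]
  refine sum_congr rfl fun i _ ↦ ?_
  rw [integral_indicator_const _ (hXi i), smul_eq_mul]

section Dropouts

variable {Ω : Type*} [MeasurableSpace Ω] {μ : Measure Ω} {lam : ℕ → Ω → Bool} {p : ℝ}

lemma measurable_dropoutRun (hmeas : ∀ k, Measurable (lam k)) (k : ℕ) :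
    Measurable fun ω ↦ dropoutRun (lam · ω) k := by
  induction k with
  | zero => exact measurable_const
  | succ k ih =>
    exact Measurable.ite (hmeas (k + 1) (measurableSet_singleton true)) measurable_const
      (ih.add_const 1)

variable [IsProbabilityMeasure μ]

lemma measureReal_le_dropoutRun (hmeas : ∀ k, Measurable (lam k)) (hindep : iIndepFun lam μ)
    (hdist : ∀ k, 1 ≤ k → μ.real {ω | lam k ω = true} = p) {i k : ℕ} (hik : i ≤ k) :
    μ.real {ω | i ≤ dropoutRun (lam · ω) k} = (1 - p) ^ i := by
  have hset : {ω | i ≤ dropoutRun (lam · ω) k} = ⋂ j ∈ Ioc (k - i) k, lam j ⁻¹' {false} := by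
    ext ω; simp [le_dropoutRun_iff, hik]
  have hfalse : ∀ j ∈ Ioc (k - i) k, (μ (lam j ⁻¹' {false})).toReal = 1 - p := by
    intro j hj
    have hcompl : lam j ⁻¹' {false} = {ω | lam j ω = true}ᶜ := by ext ω; simp
    rw [← measureReal_def, hcompl, measureReal_compl (s := {ω | lam j ω = true})
      (hmeas j (measurableSet_singleton true)),
      probReal_univ, hdist j (by rw [mem_Ioc] at hj; omega)]
  rw [hset, measureReal_def,
    hindep.meas_biInter fun j _ ↦ ⟨{false}, measurableSet_singleton _, rfl⟩, ENNReal.toReal_prod,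
    prod_congr rfl hfalse, prod_const, Nat.card_Ioc, Nat.sub_sub_self hik]

lemma measureReal_dropoutRun_eq_self (hmeas : ∀ k, Measurable (lam k)) (hindep : iIndepFun lam μ)
    (hdist : ∀ k, 1 ≤ k → μ.real {ω | lam k ω = true} = p) (k : ℕ) :
    μ.real {ω | dropoutRun (lam · ω) k = k} = (1 - p) ^ k := by
  rw [← measureReal_le_dropoutRun hmeas hindep hdist le_rfl]
  congr 1; ext ω
  simp [le_antisymm_iff, dropoutRun_le]

lemma measureReal_dropoutRun_eq_of_lt (hmeas : ∀ k, Measurable (lam k)) (hindep : iIndepFun lam μ)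
    (hdist : ∀ k, 1 ≤ k → μ.real {ω | lam k ω = true} = p) {i k : ℕ} (hik : i < k) :
    μ.real {ω | dropoutRun (lam · ω) k = i} = p * (1 - p) ^ i := by
  have hset : {ω | dropoutRun (lam · ω) k = i} =
      {ω | i ≤ dropoutRun (lam · ω) k} \ {ω | i + 1 ≤ dropoutRun (lam · ω) k} := by
    ext ω; simp only [Set.mem_ofPred_eq, Set.mem_sdiff]; omega
  have hsub : {ω | i + 1 ≤ dropoutRun (lam · ω) k} ⊆ {ω | i ≤ dropoutRun (lam · ω) k} :=
    Set.ofPred_subset_ofPred.2 fun ω h ↦ by omega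
  rw [hset, measureReal_sdiff hsub (measurable_dropoutRun hmeas k measurableSet_Ici),
    measureReal_le_dropoutRun hmeas hindep hdist hik.le,
    measureReal_le_dropoutRun hmeas hindep hdist (show i + 1 ≤ k from hik)]
  ring

lemma integral_comp_dropoutRun (hmeas : ∀ k, Measurable (lam k)) (hindep : iIndepFun lam μ)
    (hdist : ∀ k, 1 ≤ k → μ.real {ω | lam k ω = true} = p) (g : ℕ → ℝ) (k : ℕ) :
    ∫ ω, g (dropoutRun (lam · ω) k) ∂μ =
      ∑ i ∈ range k, p * (1 - p) ^ i * g i + (1 - p) ^ k * g k := by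
  rw [integral_comp_eq_sum_measureReal_s13 (measurable_dropoutRun hmeas k)
      (fun ω ↦ dropoutRun_le _ k), sum_range_succ,
    measureReal_dropoutRun_eq_self hmeas hindep hdist]
  congr 1
  refine sum_congr rfl fun i hi ↦ ?_
  rw [measureReal_dropoutRun_eq_of_lt hmeas hindep hdist (mem_range.1 hi)]

end Dropouts

lemma sum_range_truncatedGeometric_expectation (p : ℝ) (g : ℕ → ℝ) (s : ℕ) :
    ∑ k ∈ range (s + 1), (∑ i ∈ range k, p * (1 - p) ^ i * g i + (1 - p) ^ k * g k) =
      ∑ i ∈ range (s + 1), (1 + p * ((s : ℝ) - i)) * (1 - p) ^ i * g i := by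
  induction s with
  | zero => simp
  | succ s ih =>
    have hcoeff : ∑ i ∈ range (s + 1), (1 + p * (((s + 1 : ℕ) : ℝ) - i)) * (1 - p) ^ i * g i =
        ∑ i ∈ range (s + 1), (1 + p * ((s : ℝ) - i)) * (1 - p) ^ i * g i +
          ∑ i ∈ range (s + 1), p * (1 - p) ^ i * g i := by
      rw [← sum_add_distrib]
      exact sum_congr rfl fun i _ ↦ by push_cast; ring
    rw [sum_range_succ, ih, sum_range_succ _ (s + 1), hcoeff]
    ring

theorem offline_block_expected_cost_general {d : ℕ}
    (A Q Pbar : Matrix (Fin d) (Fin d) ℝ)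
    (lam_prob : ℝ)
    (s : ℕ)
    {Ω : Type*} [MeasurableSpace Ω] (μ : Measure Ω) [IsProbabilityMeasure μ]
    (lam : ℕ → Ω → Bool) (hmeas : ∀ k, Measurable (lam k))
    (hindep : iIndepFun lam μ)
    (hdist : ∀ k, 1 ≤ k → (μ {ω | lam k ω = true}).toReal = lam_prob)
    (P : ℕ → Ω → Matrix (Fin d) (Fin d) ℝ)
    (hP0 : ∀ ω, P 0 ω = Pbar)
    (hPrec : ∀ k ω, k + 1 ≤ s → P (k + 1) ω =
      if lam (k + 1) ω = true then Pbar else A * P k ω * Aᵀ + Q) :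
    ∑ k ∈ Finset.range (s + 1), ∫ ω, (P k ω).trace ∂μ =
      (1 + lam_prob * (s : ℝ)) * Pbar.trace +
        ∑ i ∈ Finset.Icc 1 s,
          (1 + lam_prob * ((s : ℝ) - (i : ℝ))) * (1 - lam_prob) ^ i *
            ((fun Z => A * Z * Aᵀ + Q)^[i] Pbar).trace := by
  set g : ℕ → ℝ := fun i ↦ ((fun Z => A * Z * Aᵀ + Q)^[i] Pbar).trace
  have hP : ∀ k ≤ s, ∀ ω, (P k ω).trace = g (dropoutRun (lam · ω) k) := fun k hk ω ↦ by
    rw [iterate_dropoutRun (fun Z => A * Z * Aᵀ + Q) Pbar (lam · ω) (P · ω) s (hP0 ω)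
      (fun k hk ↦ hPrec k ω hk) k hk]
  calc ∑ k ∈ range (s + 1), ∫ ω, (P k ω).trace ∂μ
      = ∑ k ∈ range (s + 1), ∫ ω, g (dropoutRun (lam · ω) k) ∂μ :=
        sum_congr rfl fun k hk ↦ integral_congr_ae <| .of_forall <|
          hP k (Nat.lt_succ_iff.1 (mem_range.1 hk))
    _ = ∑ i ∈ range (s + 1), (1 + lam_prob * ((s : ℝ) - i)) * (1 - lam_prob) ^ i * g i := by
        simp_rw [integral_comp_dropoutRun hmeas hindep hdist]
        exact sum_range_truncatedGeometric_expectation lam_prob g s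
    _ = _ := by
        rw [Nat.range_succ_eq_Icc_zero, ← sum_Ioc_add_eq_sum_Icc s.zero_le,
          ← Icc_add_one_left_eq_Ioc, zero_add, add_comm]
        simp [g]

/-- Expected aggregate estimation cost of one block of the offline schedule:
high power at time `0` (so `P 0 = P̄`) followed by `s` low-power slots with
i.i.d. Bernoulli(λ) arrivals gives
`∑_{k=0}^{s} E[trace (P k)] = (1 + λ s) trace P̄
  + ∑_{i=1}^{s} (1 + λ (s - i)) (1-λ)^i trace (h^[i] P̄)`. -/
theorem offline_block_expected_cost {d : ℕ}
    (A Q Pbar : Matrix (Fin d) (Fin d) ℝ) (hQ : Q.PosSemidef) (hPbar : Pbar.PosSemidef)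
    (lam_prob : ℝ) (hlam0 : 0 < lam_prob) (hlam1 : lam_prob < 1)
    (s : ℕ) (hs : 1 ≤ s)
    {Ω : Type*} [MeasurableSpace Ω] (μ : Measure Ω) [IsProbabilityMeasure μ]
    (lam : ℕ → Ω → Bool) (hmeas : ∀ k, Measurable (lam k))
    (hindep : iIndepFun lam μ)
    (hdist : ∀ k, 1 ≤ k → (μ {ω | lam k ω = true}).toReal = lam_prob)
    (P : ℕ → Ω → Matrix (Fin d) (Fin d) ℝ)
    (hP0 : ∀ ω, P 0 ω = Pbar)
    (hPrec : ∀ k ω, k + 1 ≤ s → P (k + 1) ω =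
      if lam (k + 1) ω = true then Pbar else A * P k ω * Aᵀ + Q) :
    ∑ k ∈ Finset.range (s + 1), ∫ ω, (P k ω).trace ∂μ =
      (1 + lam_prob * (s : ℝ)) * Pbar.trace +
        ∑ i ∈ Finset.Icc 1 s,
          (1 + lam_prob * ((s : ℝ) - (i : ℝ))) * (1 - lam_prob) ^ i *
            ((fun Z => A * Z * Aᵀ + Q)^[i] Pbar).trace :=
  offline_block_expected_cost_general A Q Pbar lam_prob s μ lam hmeas hindep hdist P hP0 hPrec
end
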